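/- arXiv:1706.08165 — 5 statements merged into one kernel-verified Lean document; each statement's English description precedes it below -/
import Mathlib

section
/- The group homomorphism \(\Phi : \mathbb{Z}^3 \to \mathbb{Z}_{20}\) defined by \(\Phi(e_1) = 2\), \(\Phi(e_2) = 5\), \(\Phi(e_3) = 6\) is surjective, and its restriction to the 20-element set \(V^* = \{v \in \mathbb{Z}^3 : d(v,V) \le 1\}\) (where \(V = \{(0,0,0),(1,0,0),(0,1,0),(1,1,0)\}\)) is a bijection onto \(\mathbb{Z}_{20}\). -/
def dist1 (u v : ℤ × ℤ × ℤ) : ℤ :=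
  |u.1 - v.1| + |u.2.1 - v.2.1| + |u.2.2 - v.2.2|

def Vsq : Set (ℤ × ℤ × ℤ) := {(0,0,0), (1,0,0), (0,1,0), (1,1,0)}

def Vstar : Set (ℤ × ℤ × ℤ) := {v | ∃ w ∈ Vsq, dist1 v w ≤ 1}

def Λ : SimpleGraph (ℤ × ℤ × ℤ) where
  Adj u v := dist1 u v = 1
  symm := by
    constructor
    intro u v h
    simpa [dist1, abs_sub_comm] using h
  loopless := by
    constructor
    intro u h
    simp [dist1] at h

def IsPDS (S : Set (ℤ × ℤ × ℤ)) : Prop :=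
  ∀ v ∉ S, ∃! w, w ∈ S ∧ dist1 v w = 1

def comp (S : Set (ℤ × ℤ × ℤ)) (v : ℤ × ℤ × ℤ) : Set (ℤ × ℤ × ℤ) :=
  {w | ∃ (hv : v ∈ S) (hw : w ∈ S), (Λ.induce S).Reachable ⟨v, hv⟩ ⟨w, hw⟩}

def AllComponentsFourCycles (S : Set (ℤ × ℤ × ℤ)) : Prop :=
  ∀ v ∈ S, (comp S v).ncard = 4 ∧
    ∀ w ∈ comp S v, {u ∈ comp S v | dist1 w u = 1}.ncard = 2

/-!
`V*` is the Minkowski sum of the unit square `V` and the seven-point ℓ¹ unit ball, a finite set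
of at most 20 points. `Φ` attains all 20 residues on it, so it maps `V*` bijectively onto `ℤ/20`;
in particular `Φ` is surjective.
-/

open Pointwise

def l1UnitBall : Finset (ℤ × ℤ × ℤ) :=
  {(0,0,0), (1,0,0), (-1,0,0), (0,1,0), (0,-1,0), (0,0,1), (0,0,-1)}

lemma dist1_le_one_iff {v w : ℤ × ℤ × ℤ} : dist1 v w ≤ 1 ↔ v - w ∈ l1UnitBall := by
  change |(v - w).1| + |(v - w).2.1| + |(v - w).2.2| ≤ 1 ↔ _
  obtain ⟨a, b, c⟩ := v - w
  simp only [l1UnitBall, Finset.mem_insert, Finset.mem_singleton, Prod.mk.injEq]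
  rcases abs_cases a with ⟨ha, _⟩ | ⟨ha, _⟩ <;> rcases abs_cases b with ⟨hb, _⟩ | ⟨hb, _⟩ <;>
    rcases abs_cases c with ⟨hc, _⟩ | ⟨hc, _⟩ <;> rw [ha, hb, hc] <;> omega

lemma setOf_exists_dist1_le_one (S : Set (ℤ × ℤ × ℤ)) :
    {v | ∃ w ∈ S, dist1 v w ≤ 1} = S + ↑l1UnitBall := by
  ext v
  simp only [Set.mem_ofPred_eq, dist1_le_one_iff, Set.mem_add, Finset.mem_coe]
  constructor
  · rintro ⟨w, hw, hvw⟩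
    exact ⟨w, hw, v - w, hvw, add_sub_cancel w v⟩
  · rintro ⟨w, hw, u, hu, rfl⟩
    exact ⟨w, hw, by rwa [add_sub_cancel_left]⟩

def vsqFinset : Finset (ℤ × ℤ × ℤ) := {(0,0,0), (1,0,0), (0,1,0), (1,1,0)}

lemma Vstar_eq_coe_add : Vstar = ↑(vsqFinset + l1UnitBall) := by
  rw [Finset.coe_add, Vstar, setOf_exists_dist1_le_one]
  simp [Vsq, vsqFinset]

def phi (v : ℤ × ℤ × ℤ) : ZMod 20 := 2 * v.1 + 5 * v.2.1 + 6 * v.2.2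

lemma image_phi_vsqFinset_add_l1UnitBall :
    (vsqFinset + l1UnitBall).image phi = Finset.univ := by
  decide

lemma bijOn_phi_Vstar : Set.BijOn phi Vstar Set.univ := by
  rw [Vstar_eq_coe_add, ← Finset.coe_univ]
  exact (Finset.image_eq_iff_bijOn_of_card (by decide)).1 image_phi_vsqFinset_add_l1UnitBall

theorem stmt2 :
    Function.Surjective (fun v : ℤ × ℤ × ℤ => (2 * v.1 + 5 * v.2.1 + 6 * v.2.2 : ZMod 20)) ∧
    Set.BijOn (fun v : ℤ × ℤ × ℤ => (2 * v.1 + 5 * v.2.1 + 6 * v.2.2 : ZMod 20))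
      Vstar Set.univ :=
  ⟨Set.surjOn_univ.1 (bijOn_phi_Vstar.surjOn.mono (Set.subset_univ _) subset_rfl),
    bijOn_phi_Vstar⟩
end

section
/- Define \(S = \{v \in \mathbb{Z}^3 : 2v_1 + 5v_2 + 6v_3 \equiv r \pmod{20} \text{ for some } r \in \{0, 2, 5, 7\}\}\). Then \(S\) is a perfect dominating set of the unit distance graph of \(\mathbb{Z}^3\): every vertex \(v \in \mathbb{Z}^3 \setminus S\) has exactly one neighbor (point at \(\ell_1\)-distance 1) in \(S\). -/
/-!
The map `Φ v = 2 v₁ + 5 v₂ + 6 v₃` is additive, so it sends the six neighbours `v ± eᵢ` of `v`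
to `Φ v ± 2`, `Φ v ± 5`, `Φ v ± 6`. Hence the preimage of `T = {0, 2, 5, 7} ⊆ ℤ/20` is a perfect
dominating set as soon as every residue outside `T` has exactly one of these six translates in
`T`, which is a finite check in `ZMod 20`.
-/

def unitStep : Fin 6 → ℤ × ℤ × ℤ :=
  ![(1, 0, 0), (-1, 0, 0), (0, 1, 0), (0, -1, 0), (0, 0, 1), (0, 0, -1)]

lemma unitStep_injective : Function.Injective unitStep := by
  decide

lemma dist1_eq_one_iff (v w : ℤ × ℤ × ℤ) : dist1 v w = 1 ↔ ∃ i, w = v + unitStep i := by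
  obtain ⟨a, b, c⟩ := v
  obtain ⟨d, e, f⟩ := w
  simp only [dist1, Fin.exists_fin_succ, Fin.exists_fin_zero, unitStep, Prod.mk_add_mk,
    Prod.mk.injEq, Matrix.cons_val_zero, Matrix.cons_val_succ, add_zero, or_false]
  rcases abs_cases (a - d) with ⟨h₁, _⟩ | ⟨h₁, _⟩ <;>
  rcases abs_cases (b - e) with ⟨h₂, _⟩ | ⟨h₂, _⟩ <;>
  rcases abs_cases (c - f) with ⟨h₃, _⟩ | ⟨h₃, _⟩ <;>
  rw [h₁, h₂, h₃] <;> omega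

lemma existsUnique_neighbor_iff (S : Set (ℤ × ℤ × ℤ)) (v : ℤ × ℤ × ℤ) :
    (∃! w, w ∈ S ∧ dist1 v w = 1) ↔ ∃! i, v + unitStep i ∈ S := by
  constructor
  · rintro ⟨w, ⟨hwS, hvw⟩, huniq⟩
    obtain ⟨i, rfl⟩ := (dist1_eq_one_iff v w).1 hvw
    exact ⟨i, hwS, fun j hj => unitStep_injective <| add_left_cancel <|
      huniq _ ⟨hj, (dist1_eq_one_iff _ _).2 ⟨j, rfl⟩⟩⟩
  · rintro ⟨i, hi, huniq⟩
    refine ⟨v + unitStep i, ⟨hi, (dist1_eq_one_iff _ _).2 ⟨i, rfl⟩⟩, ?_⟩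
    rintro w ⟨hwS, hvw⟩
    obtain ⟨j, rfl⟩ := (dist1_eq_one_iff v w).1 hvw
    rw [huniq j hwS]

theorem isPDS_preimage {G : Type*} [AddCommGroup G] (Φ : ℤ × ℤ × ℤ →+ G) (T : Set G)
    (hT : ∀ r ∉ T, ∃! i, r + Φ (unitStep i) ∈ T) : IsPDS (Φ ⁻¹' T) := fun v hv =>
  (existsUnique_neighbor_iff _ v).2 (by simpa only [Set.mem_preimage, map_add] using hT (Φ v) hv)

section LinearForm

variable {G : Type*} [AddCommGroup G]

def linearForm (α β γ : G) : ℤ × ℤ × ℤ →+ G where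
  toFun v := v.1 • α + v.2.1 • β + v.2.2 • γ
  map_zero' := by simp
  map_add' u v := by
    simp only [Prod.fst_add, Prod.snd_add, add_zsmul]
    abel

lemma linearForm_unitStep (α β γ : G) (i : Fin 6) :
    linearForm α β γ (unitStep i) = ![α, -α, β, -β, γ, -γ] i := by
  fin_cases i <;> simp [linearForm, unitStep]

end LinearForm

lemma existsUnique_translate_mem_zmod20 (r : ZMod 20) (hr : r ∉ ({0, 2, 5, 7} : Set (ZMod 20))) :
    ∃! i : Fin 6, r + ![2, -2, 5, -5, 6, -6] i ∈ ({0, 2, 5, 7} : Set (ZMod 20)) := by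
  revert r
  -- `∃!` is a definition that instance search does not see through
  unfold ExistsUnique
  decide

theorem stmt7 :
    IsPDS {v : ℤ × ℤ × ℤ |
      (2 * v.1 + 5 * v.2.1 + 6 * v.2.2 : ZMod 20) ∈ ({0, 2, 5, 7} : Set (ZMod 20))} := by
  convert isPDS_preimage (linearForm (2 : ZMod 20) 5 6) {0, 2, 5, 7} fun r hr => ?_ using 1
  · ext v
    simp [linearForm, mul_comm]
  · simpa only [linearForm_unitStep] using existsUnique_translate_mem_zmod20 r hr
end

section
/- Define \(S = \{v \in \mathbb{Z}^3 : 2v_1 + 5v_2 + 6v_3 \bmod 20 \in \{0, 2, 5, 7\}\}\). Then every connected component of the subgraph of the unit distance graph of \(\mathbb{Z}^3\) induced by \(S\) is a 4-cycle, i.e., a translate of the unit square \(\{(0,0,0),(1,0,0),(1,1,0),(0,1,0)\}\). -/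
/-!
Along an edge of the lattice the weight `2v₁ + 5v₂ + 6v₃ (mod 20)` changes by `±2`, `±5` or `±6`.
From each of the residues `0, 2, 7, 5` exactly two of these steps stay inside `{0, 2, 5, 7}`, and
they walk around the unit square `z, z + e₁, z + e₁ + e₂, z + e₂` whose corner `z` has weight `0`.
Such a square is therefore closed under adjacency within `S` and connected, hence a component; and
every `v ∈ S` lies on the square anchored at `v - c`, where `c` is the corner of the unit square
with the same weight as `v`.
-/

theorem SimpleGraph.mem_of_reachable_induce {V : Type*} {G : SimpleGraph V} {T C : Set V}
    (hC : ∀ w ∈ C, ∀ u ∈ T, G.Adj w u → u ∈ C) {a b : T}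
    (hab : (G.induce T).Reachable a b) (ha : a.1 ∈ C) : b.1 ∈ C := by
  obtain ⟨p⟩ := hab
  induction p with
  | nil => exact ha
  | cons hadj _ ih => exact ih (hC _ ha _ (Subtype.prop _) hadj)

theorem comp_eq_of_adj_closed {T C : Set (ℤ × ℤ × ℤ)} {z v : ℤ × ℤ × ℤ} (hCT : C ⊆ T)
    (hz : z ∈ C) (hv : v ∈ C) (hclosed : ∀ w ∈ C, ∀ u ∈ T, Λ.Adj w u → u ∈ C)
    (hreach : ∀ w (hw : w ∈ C), (Λ.induce T).Reachable ⟨z, hCT hz⟩ ⟨w, hCT hw⟩) :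
    comp T v = C := by
  ext w
  constructor
  · rintro ⟨_, _, hvw⟩
    exact SimpleGraph.mem_of_reachable_induce hclosed hvw hv
  · intro hw
    exact ⟨hCT hv, hCT hw, (hreach v hv).symm.trans (hreach w hw)⟩

def weight (v : ℤ × ℤ × ℤ) : ZMod 20 := 2 * v.1 + 5 * v.2.1 + 6 * v.2.2

theorem weight_sub (u v : ℤ × ℤ × ℤ) : weight (u - v) = weight u - weight v := by
  simp only [weight, Prod.fst_sub, Prod.snd_sub, Int.cast_sub]
  ring

def weights : Finset (ZMod 20) := {0, 2, 5, 7}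

def S : Set (ℤ × ℤ × ℤ) := {v | weight v ∈ ({0, 2, 5, 7} : Set (ZMod 20))}

theorem mem_S {v : ℤ × ℤ × ℤ} : v ∈ S ↔ weight v ∈ weights := by
  simp [S, weights]

def corners : Finset (ℤ × ℤ × ℤ) := {0, (1,0,0), (1,1,0), (0,1,0)}

def unitVectors : Finset (ℤ × ℤ × ℤ) :=
  {(1,0,0), (-1,0,0), (0,1,0), (0,-1,0), (0,0,1), (0,0,-1)}

theorem weight_mem_weights_of_mem_corners : ∀ c ∈ corners, weight c ∈ weights := by
  decide

theorem exists_mem_corners_weight_eq : ∀ s ∈ weights, ∃ c ∈ corners, weight c = s := by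
  decide

theorem add_mem_corners_of_weight_mem :
    ∀ c ∈ corners, ∀ d ∈ unitVectors, weight (c + d) ∈ weights → c + d ∈ corners := by
  decide

theorem mem_unitVectors_of_abs_add_abs_add_abs_eq_one {a b c : ℤ} (h : |a| + |b| + |c| = 1) :
    (a, b, c) ∈ unitVectors := by
  have := abs_nonneg a; have := abs_nonneg b; have := abs_nonneg c
  obtain ⟨ha1, ha2⟩ := abs_le.mp (show |a| ≤ 1 by omega)
  obtain ⟨hb1, hb2⟩ := abs_le.mp (show |b| ≤ 1 by omega)
  obtain ⟨hc1, hc2⟩ := abs_le.mp (show |c| ≤ 1 by omega)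
  interval_cases a <;> interval_cases b <;> interval_cases c <;> simp_all [unitVectors]

theorem sub_mem_unitVectors_of_adj {w u : ℤ × ℤ × ℤ} (h : Λ.Adj w u) : u - w ∈ unitVectors := by
  have hd : dist1 w u = 1 := h
  apply mem_unitVectors_of_abs_add_abs_add_abs_eq_one
  simpa [dist1, abs_sub_comm] using hd

def square (z : ℤ × ℤ × ℤ) : Set (ℤ × ℤ × ℤ) := {z, z + (1,0,0), z + (1,1,0), z + (0,1,0)}

theorem mem_square_self (z : ℤ × ℤ × ℤ) : z ∈ square z :=
  Set.mem_insert z _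

theorem mem_square_iff {z w : ℤ × ℤ × ℤ} : w ∈ square z ↔ w - z ∈ corners := by
  simp [square, corners, sub_eq_iff_eq_add']

theorem square_subset_S {z : ℤ × ℤ × ℤ} (hz : weight z = 0) : square z ⊆ S := fun w hw => by
  rw [mem_S, ← sub_zero (weight w), ← hz, ← weight_sub]
  exact weight_mem_weights_of_mem_corners _ (mem_square_iff.mp hw)

theorem mem_square_of_adj {z w u : ℤ × ℤ × ℤ} (hz : weight z = 0) (hw : w ∈ square z) (hu : u ∈ S)
    (hwu : Λ.Adj w u) : u ∈ square z := by
  have key := add_mem_corners_of_weight_mem _ (mem_square_iff.mp hw) _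
    (sub_mem_unitVectors_of_adj hwu)
  rw [sub_add_sub_cancel', weight_sub, hz, sub_zero] at key
  exact mem_square_iff.mpr (key (mem_S.mp hu))

theorem induce_Λ_adj_iff {T : Set (ℤ × ℤ × ℤ)} {a b : T} :
    (Λ.induce T).Adj a b ↔ dist1 a b = 1 :=
  Iff.rfl

theorem reachable_square {z : ℤ × ℤ × ℤ} (hz : weight z = 0) (w : ℤ × ℤ × ℤ) (hw : w ∈ square z) :
    (Λ.induce S).Reachable ⟨z, square_subset_S hz (mem_square_self z)⟩
      ⟨w, square_subset_S hz hw⟩ := by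
  have hS : ∀ c ∈ corners, z + c ∈ S := fun c hc =>
    square_subset_S hz (mem_square_iff.mpr (by rwa [add_sub_cancel_left]))
  have h0 : z ∈ S := by simpa using hS 0 (by decide)
  have reach_e1 : (Λ.induce S).Reachable ⟨z, h0⟩ ⟨z + (1,0,0), hS (1,0,0) (by decide)⟩ :=
    SimpleGraph.Adj.reachable (induce_Λ_adj_iff.mpr (by simp [dist1]))
  have reach_e2 : (Λ.induce S).Reachable ⟨z, h0⟩ ⟨z + (0,1,0), hS (0,1,0) (by decide)⟩ :=
    SimpleGraph.Adj.reachable (induce_Λ_adj_iff.mpr (by simp [dist1]))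
  have reach_e12 : (Λ.induce S).Reachable ⟨z + (0,1,0), hS (0,1,0) (by decide)⟩
      ⟨z + (1,1,0), hS (1,1,0) (by decide)⟩ :=
    SimpleGraph.Adj.reachable (induce_Λ_adj_iff.mpr (by simp [dist1]))
  rcases hw with rfl | rfl | rfl | rfl
  · rfl
  · exact reach_e1
  · exact reach_e2.trans reach_e12
  · exact reach_e2

theorem exists_weight_eq_zero_mem_square {v : ℤ × ℤ × ℤ} (hv : v ∈ S) :
    ∃ z, weight z = 0 ∧ v ∈ square z := by
  obtain ⟨c, hc, hcv⟩ := exists_mem_corners_weight_eq _ (mem_S.mp hv)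
  exact ⟨v - c, by rw [weight_sub, hcv, sub_self], by rwa [mem_square_iff, sub_sub_cancel]⟩

theorem stmt8 :
    ∀ v ∈ {v : ℤ × ℤ × ℤ |
        (2 * v.1 + 5 * v.2.1 + 6 * v.2.2 : ZMod 20) ∈ ({0, 2, 5, 7} : Set (ZMod 20))},
      ∃ z : ℤ × ℤ × ℤ,
        comp {v : ℤ × ℤ × ℤ |
            (2 * v.1 + 5 * v.2.1 + 6 * v.2.2 : ZMod 20) ∈ ({0, 2, 5, 7} : Set (ZMod 20))} v =
          {z, z + (1,0,0), z + (1,1,0), z + (0,1,0)} := by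
  intro v hv
  obtain ⟨z, hz, hvz⟩ := exists_weight_eq_zero_mem_square hv
  exact ⟨z, comp_eq_of_adj_closed (square_subset_S hz) (mem_square_self z) hvz
    (fun _ hw _ hu => mem_square_of_adj hz hw hu) (reachable_square hz)⟩
end

section
/- Let \(\Theta\) be a finite induced subgraph of the unit distance graph of \(\mathbb{Z}^n\) that arises as an induced component of some perfect dominating set. Then \(\Theta\) is isomorphic to a Cartesian product of paths \(P_{i_1} \square P_{i_2} \square \cdots \square P_{i_n}\) with each \(i_k \ge 1\). -/
def distL (n : ℕ) (u v : Fin n → ℤ) : ℤ := ∑ i, |u i - v i|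

def ΛL (n : ℕ) : SimpleGraph (Fin n → ℤ) where
  Adj u v := distL n u v = 1
  symm := by
    constructor
    intro u v h
    simpa [distL, abs_sub_comm] using h
  loopless := by
    constructor
    intro u h
    simp [distL] at h

def IsPDSn (n : ℕ) (S : Set (Fin n → ℤ)) : Prop :=
  ∀ v ∉ S, ∃! w, w ∈ S ∧ distL n v w = 1

def compn (n : ℕ) (S : Set (Fin n → ℤ)) (v : Fin n → ℤ) : Set (Fin n → ℤ) :=
  {w | ∃ (hv : v ∈ S) (hw : w ∈ S), ((ΛL n).induce S).Reachable ⟨v, hv⟩ ⟨w, hw⟩}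

/-- The Cartesian product of paths `P_{i 0} □ ⋯ □ P_{i (n-1)}`. -/
def pathsProduct (n : ℕ) (i : Fin n → ℕ) : SimpleGraph (∀ k, Fin (i k)) where
  Adj a b := (∑ k, |((a k : ℤ)) - ((b k : ℤ))|) = 1
  symm := by
    constructor
    intro a b h
    simpa [abs_sub_comm] using h
  loopless := by
    constructor
    intro a h
    simp at h

/-!
Let `C` be a component of a perfect dominating set `S`. If `x + ε eᵢ` and `x + δ eⱼ` (`i ≠ j`) lie
in `C`, then so does `x + ε eᵢ + δ eⱼ`: otherwise this point would lie outside `S` and have two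
neighbours in `S`. Completing squares step by step along a path in `C` shows that `C` contains the
box spanned by any two of its points. Hence `C` is closed under coordinatewise `min` and `max`, so
a finite `C` is an order interval `[a, b]` of `ℤⁿ`, whose unit distance graph is
`P_{b₁ - a₁ + 1} □ ⋯ □ P_{bₙ - aₙ + 1}`.
-/

open Set

theorem Set.Finite.exists_eq_Icc_of_uIcc_subset {α : Type*} [Lattice α] {s : Set α}
    (hfin : s.Finite) (hne : s.Nonempty) (hs : ∀ x ∈ s, ∀ y ∈ s, uIcc x y ⊆ s) :
    ∃ a b, a ≤ b ∧ s = Icc a b := by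
  have hinf : ∀ x ∈ s, ∀ y ∈ s, x ⊓ y ∈ s := fun x hx y hy => hs x hx y hy ⟨le_rfl, inf_le_sup⟩
  have hsup : ∀ x ∈ s, ∀ y ∈ s, x ⊔ y ∈ s := fun x hx y hy => hs x hx y hy ⟨inf_le_sup, le_rfl⟩
  have hne' : hfin.toFinset.Nonempty := hfin.toFinset_nonempty.2 hne
  set a := hfin.toFinset.inf' hne' id
  set b := hfin.toFinset.sup' hne' id
  have ha : a ∈ s := Finset.inf'_mem s hinf _ _ _ fun x hx => hfin.mem_toFinset.1 hx
  have hb : b ∈ s := Finset.sup'_mem s hsup _ _ _ fun x hx => hfin.mem_toFinset.1 hx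
  have hmem : ∀ x ∈ s, x ∈ Icc a b := fun x hx =>
    ⟨Finset.inf'_le id (hfin.mem_toFinset.2 hx), Finset.le_sup' id (hfin.mem_toFinset.2 hx)⟩
  have hab : a ≤ b := (hmem a ha).2
  refine ⟨a, b, hab, Subset.antisymm hmem ?_⟩
  rw [← uIcc_of_le hab]
  exact hs a ha b hb

lemma mem_uIcc_pi {ι α : Type*} [Lattice α] {x y z : ι → α} : z ∈ uIcc x y ↔ ∀ k, z k ∈ uIcc (x k) (y k) := by
  rw [← pi_univ_uIcc, mem_univ_pi]

lemma le_apply_of_mem_Icc {ι : Type*} {a b x : ι → ℤ} (hx : x ∈ Icc a b) (k : ι) :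
    a k ≤ x k ∧ x k ≤ b k :=
  ⟨hx.1 k, hx.2 k⟩

section SquareClosed

variable {ι : Type*} [Fintype ι] [DecidableEq ι]

def SquareClosed (C : Set (ι → ℤ)) : Prop :=
  ∀ (x : ι → ℤ) (i j : ι), i ≠ j → ∀ ε δ : ℤ, |ε| = 1 → |δ| = 1 →
    x + Pi.single i ε ∈ C → x + Pi.single j δ ∈ C → x + Pi.single i ε + Pi.single j δ ∈ C

variable {C : Set (ι → ℤ)}

lemma SquareClosed.add_single_mem (hC : SquareClosed C) {u : ι → ℤ} {j : ι} {ε : ℤ}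
    (hε : |ε| = 1) (hu : u + Pi.single j ε ∈ C) {w : ι → ℤ} (hwj : w j = u j)
    (hbox : uIcc u w ⊆ C) : w + Pi.single j ε ∈ C := by
  suffices H : ∀ m : ℕ, ∀ w : ι → ℤ, ∑ k, (w k - u k).natAbs < m → w j = u j →
      uIcc u w ⊆ C → w + Pi.single j ε ∈ C from H _ w (lt_add_one _) hwj hbox
  intro m
  induction m with
  | zero => intro w h; exact absurd h (Nat.not_lt_zero _)
  | succ m ih =>
    intro w hlt hwj hbox
    by_cases hwu : w = u
    · rwa [hwu]
    obtain ⟨k, hk⟩ := Function.ne_iff.1 hwu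
    have hkj : k ≠ j := by rintro rfl; exact hk hwj
    set d : ℤ := if u k < w k then 1 else -1
    have hd : |d| = 1 := by unfold d; split_ifs <;> simp
    set w' := w - Pi.single k d
    have hw'k : w' k = w k - d := by simp [w']
    have hw'ne : ∀ i, i ≠ k → w' i = w i := fun i hi => by simp [w', hi]
    have hw' : w' ∈ uIcc u w := mem_uIcc_pi.2 fun i => by
      rw [Set.mem_uIcc]
      by_cases hi : i = k
      · subst hi; rw [hw'k]; unfold d; split_ifs <;> omega
      · rw [hw'ne i hi]; omega
    have hlt' : ∑ i, (w' i - u i).natAbs < ∑ i, (w i - u i).natAbs := by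
      refine Finset.sum_lt_sum (fun i _ => ?_) ⟨k, Finset.mem_univ _, ?_⟩
      · by_cases hi : i = k
        · subst hi; rw [hw'k]; unfold d; split_ifs <;> omega
        · rw [hw'ne i hi]
      · rw [hw'k]; unfold d; split_ifs <;> omega
    have hw'C : w' + Pi.single j ε ∈ C :=
      ih w' (by omega) (by rw [hw'ne j hkj.symm, hwj])
        ((uIcc_subset_uIcc left_mem_uIcc hw').trans hbox)
    have hwC : w' + Pi.single k d ∈ C := by rw [sub_add_cancel]; exact hbox right_mem_uIcc
    have := hC w' j k hkj.symm ε d hε hd hw'C hwC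
    rwa [add_right_comm, sub_add_cancel] at this

lemma SquareClosed.uIcc_add_single_subset (hC : SquareClosed C) {x₀ x : ι → ℤ} {j : ι} {ε : ℤ}
    (hε : |ε| = 1) (hx : x + Pi.single j ε ∈ C) (hbox : uIcc x₀ x ⊆ C) :
    uIcc x₀ (x + Pi.single j ε) ⊆ C := by
  have hε' : ε = 1 ∨ ε = -1 := (abs_eq zero_le_one).1 hε
  intro z hz
  rw [mem_uIcc_pi] at hz
  have hoff : ∀ k, k ≠ j → z k ∈ uIcc (x₀ k) (x k) := fun k hk => by simpa [hk] using hz k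
  by_cases hzj : z j ∈ uIcc (x₀ j) (x j)
  · refine hbox (mem_uIcc_pi.2 fun k => ?_)
    by_cases hk : k = j
    · rwa [hk]
    · exact hoff k hk
  set w := z - Pi.single j ε
  have hwj : w j = x j := by
    have := hz j
    simp only [Pi.add_apply, Pi.single_eq_same, Set.mem_uIcc] at this hzj
    simp only [w, Pi.sub_apply, Pi.single_eq_same]
    omega
  have hw : w ∈ uIcc x₀ x := mem_uIcc_pi.2 fun k => by
    by_cases hk : k = j
    · rw [hk, hwj]; exact right_mem_uIcc
    · simpa [w, hk] using hoff k hk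
  have := hC.add_single_mem hε hx hwj ((uIcc_subset_uIcc right_mem_uIcc hw).trans hbox)
  rwa [sub_add_cancel] at this

end SquareClosed

section UnitDistanceGraph

variable {n : ℕ}

lemma ΛL_adj_iff {x y : Fin n → ℤ} :
    (ΛL n).Adj x y ↔ ∃ j ε, |ε| = 1 ∧ y = x + Pi.single j ε := by
  change ∑ i, |x i - y i| = 1 ↔ _
  constructor
  · intro h
    obtain ⟨j, hj⟩ : ∃ j, x j ≠ y j := by
      by_contra! hxy
      simp [hxy] at h
    have hsplit := Finset.add_sum_erase Finset.univ (fun i => |x i - y i|) (Finset.mem_univ j)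
    have hrest := Finset.sum_nonneg fun i (_ : i ∈ Finset.univ.erase j) => abs_nonneg (x i - y i)
    have hjpos : 0 < |x j - y j| := abs_pos.2 (sub_ne_zero.2 hj)
    have hzero := (Finset.sum_eq_zero_iff_of_nonneg fun i _ => abs_nonneg (x i - y i)).1
      (show ∑ i ∈ Finset.univ.erase j, |x i - y i| = 0 by omega)
    refine ⟨j, y j - x j, by rw [abs_sub_comm]; omega, funext fun i => ?_⟩
    by_cases hi : i = j
    · subst hi; simp
    · have := abs_eq_zero.1 (hzero i (Finset.mem_erase.2 ⟨hi, Finset.mem_univ _⟩))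
      rw [Pi.add_apply, Pi.single_eq_of_ne hi, add_zero]
      omega
  · rintro ⟨j, ε, hε, rfl⟩
    rw [Finset.sum_eq_single j (fun i _ hi => by simp [hi]) (by simp)]
    simpa using hε

variable {S : Set (Fin n → ℤ)} {v : Fin n → ℤ}

lemma mem_compn_self (hv : v ∈ S) : v ∈ compn n S v := ⟨hv, hv, .rfl⟩

lemma mem_compn_of_adj {w w' : Fin n → ℤ} (hw : w ∈ compn n S v) (hw' : w' ∈ S)
    (h : (ΛL n).Adj w w') : w' ∈ compn n S v := by
  obtain ⟨hv, _, hr⟩ := hw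
  exact ⟨hv, hw', hr.trans (SimpleGraph.Adj.reachable (G := (ΛL n).induce S) h)⟩

lemma squareClosed_compn (hS : IsPDSn n S) (v : Fin n → ℤ) : SquareClosed (compn n S v) := by
  intro x i j hij ε δ hε hδ h₁ h₂
  have hq₁ : (ΛL n).Adj (x + Pi.single i ε) (x + Pi.single i ε + Pi.single j δ) :=
    ΛL_adj_iff.2 ⟨j, δ, hδ, rfl⟩
  have hq₂ : (ΛL n).Adj (x + Pi.single j δ) (x + Pi.single i ε + Pi.single j δ) :=
    ΛL_adj_iff.2 ⟨i, ε, hε, add_right_comm _ _ _⟩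
  refine mem_compn_of_adj h₁ ?_ hq₁
  by_contra hq
  have h := congrFun ((hS _ hq).unique ⟨h₁.2.1, hq₁.symm⟩ ⟨h₂.2.1, hq₂.symm⟩) i
  have hε₀ : ε = 0 := by simpa [hij] using h
  simp [hε₀] at hε

lemma uIcc_subset_compn (hS : IsPDSn n S) {x y : Fin n → ℤ} (hx : x ∈ compn n S v)
    (hy : y ∈ compn n S v) : uIcc x y ⊆ compn n S v := by
  obtain ⟨hv, hxS, hrx⟩ := id hx
  obtain ⟨_, hyS, hry⟩ := hy
  suffices H : ∀ b : S, Relation.ReflTransGen ((ΛL n).induce S).Adj ⟨x, hxS⟩ b →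
      uIcc x b ⊆ compn n S v from
    H ⟨y, hyS⟩ ((SimpleGraph.reachable_iff_reflTransGen _ _).1 (hrx.symm.trans hry))
  intro b hb
  induction hb with
  | refl => simpa using hx
  | @tail b c _ hbc ih =>
    have hbc : (ΛL n).Adj b.1 c.1 := hbc
    obtain ⟨j, ε, hε, hc⟩ := ΛL_adj_iff.1 hbc
    have hcC := mem_compn_of_adj (ih right_mem_uIcc) c.2 hbc
    rw [hc] at hcC ⊢
    exact (squareClosed_compn hS v).uIcc_add_single_subset hε hcC ih

def iccIsoPathsProduct (a b : Fin n → ℤ) :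
    (ΛL n).induce (Icc a b) ≃g pathsProduct n fun k => (b k + 1 - a k).toNat where
  toFun x k := ⟨(x.1 k - a k).toNat, by have := le_apply_of_mem_Icc x.2 k; omega⟩
  invFun f := ⟨fun k => a k + f k, fun k => by simp,
    fun k => show a k + (f k : ℕ) ≤ b k by have := (f k).2; omega⟩
  left_inv x := by
    ext k
    have := le_apply_of_mem_Icc x.2 k
    simp only [Int.ofNat_toNat]
    omega
  right_inv f := by ext k; simp
  map_rel_iff' {x y} := by
    change ∑ k, |((x.1 k - a k).toNat : ℤ) - (y.1 k - a k).toNat| = 1 ↔ ∑ k, |x.1 k - y.1 k| = 1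
    rw [Finset.sum_congr rfl fun k _ => by
      rw [Int.toNat_of_nonneg (sub_nonneg.2 (x.2.1 k)), Int.toNat_of_nonneg (sub_nonneg.2 (y.2.1 k)),
        sub_sub_sub_cancel_right]]

end UnitDistanceGraph

theorem stmt10 (n : ℕ) (S : Set (Fin n → ℤ)) (hS : IsPDSn n S)
    (v : Fin n → ℤ) (hv : v ∈ S) (hfin : (compn n S v).Finite) :
    ∃ i : Fin n → ℕ, (∀ k, 1 ≤ i k) ∧
      Nonempty ((ΛL n).induce (compn n S v) ≃g pathsProduct n i) := by
  obtain ⟨a, b, hab, hbox⟩ := hfin.exists_eq_Icc_of_uIcc_subset ⟨v, mem_compn_self hv⟩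
    fun x hx y hy => uIcc_subset_compn hS hx hy
  refine ⟨fun k => (b k + 1 - a k).toNat, fun k => by
    have : a k ≤ b k := hab k
    dsimp only
    omega, ?_⟩
  rw [hbox]
  exact ⟨iccIsoPathsProduct a b⟩
end

section
/- Let \(d\) be the \(\ell_1\) distance on \(\mathbb{Z}^3\), \(V = \{(0,0,0),(1,0,0),(0,1,0),(1,1,0)\}\), and \(V^* = \{v : d(v,V) \le 1\}\). If \(\Phi : \mathbb{Z}^3 \to G\) is a group homomorphism onto an abelian group \(G\) of order 20 whose restriction to \(V^*\) is injective, then for every \(v \in \mathbb{Z}^3\) there exists a unique \(z \in \ker\Phi\) with \(v - z \in V^*\). -/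
/-!
Since `Φ` is injective on `V*` and `|V*| = 20 = |G|`, it maps `V*` bijectively onto `G`. So for
every `v` there is exactly one `w ∈ V*` with `Φ w = Φ v`, that is, exactly one `z = v - w ∈ ker Φ`
with `v - z ∈ V*`. The count `|V*| = 20` is a finite check inside the box `[-1,2]² × [-1,1]`.
-/

open Set in
theorem AddMonoidHom.existsUnique_mem_ker_sub_mem {A G : Type*} [AddCommGroup A] [AddGroup G]
    [Finite G] (Φ : A →+ G) {S : Set A} (hS : S.ncard = Nat.card G) (hinj : InjOn Φ S)
    (v : A) : ∃! z, z ∈ Φ.ker ∧ v - z ∈ S := by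
  have himg : Φ '' S = univ :=
    eq_of_subset_of_ncard_le (subset_univ _) (by rw [ncard_univ, hinj.ncard_image, hS])
  obtain ⟨w, hw, hΦw⟩ : Φ v ∈ Φ '' S := himg ▸ mem_univ _
  refine ⟨v - w, ⟨by simp [hΦw], by simpa using hw⟩, ?_⟩
  rintro z ⟨hz, hvz⟩
  have : v - z = w := hinj hvz hw (by rw [map_sub, Φ.mem_ker.mp hz, sub_zero, hΦw])
  rw [← this, sub_sub_cancel]

theorem abs_sub_le_one_of_dist1_le_one {u w : ℤ × ℤ × ℤ} (h : dist1 u w ≤ 1) :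
    |u.1 - w.1| ≤ 1 ∧ |u.2.1 - w.2.1| ≤ 1 ∧ |u.2.2 - w.2.2| ≤ 1 := by
  have := abs_nonneg (u.1 - w.1)
  have := abs_nonneg (u.2.1 - w.2.1)
  have := abs_nonneg (u.2.2 - w.2.2)
  unfold dist1 at h
  omega

theorem Vstar_eq_filter : Vstar = ↑({v ∈ Finset.Icc (-1) 2 ×ˢ Finset.Icc (-1) 2 ×ˢ Finset.Icc (-1) 1 |
    ∃ w ∈ ({(0,0,0), (1,0,0), (0,1,0), (1,1,0)} : Finset (ℤ × ℤ × ℤ)), dist1 v w ≤ 1}) := by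
  ext v
  simp only [Vstar, Vsq, Finset.coe_filter, Finset.mem_product, Finset.mem_Icc, Finset.mem_insert,
    Finset.mem_singleton, Set.mem_insert_iff, Set.mem_singleton_iff, Set.mem_ofPred_eq]
  refine ⟨fun ⟨w, hw, hd⟩ ↦ ⟨?_, w, hw, hd⟩, fun ⟨_, h⟩ ↦ h⟩
  obtain ⟨h1, h2, h3⟩ := abs_sub_le_one_of_dist1_le_one hd
  rw [abs_le] at h1 h2 h3
  rcases hw with rfl | rfl | rfl | rfl <;> simp only at h1 h2 h3 <;> omega

theorem Vstar_ncard : Vstar.ncard = 20 := by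
  rw [Vstar_eq_filter, Set.ncard_coe_finset]
  decide

theorem stmt15_general (G : Type) [AddCommGroup G] (hG : Nat.card G = 20)
    (Φ : (ℤ × ℤ × ℤ) →+ G)
    (hinj : Set.InjOn Φ Vstar) :
    ∀ v : ℤ × ℤ × ℤ, ∃! z : ℤ × ℤ × ℤ, z ∈ Φ.ker ∧ v - z ∈ Vstar := by
  have : Finite G := Nat.finite_of_card_ne_zero (by omega)
  exact Φ.existsUnique_mem_ker_sub_mem (by rw [Vstar_ncard, hG]) hinj

theorem stmt15 (G : Type) [AddCommGroup G] (hG : Nat.card G = 20)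
    (Φ : (ℤ × ℤ × ℤ) →+ G) (hsurj : Function.Surjective Φ)
    (hinj : Set.InjOn Φ Vstar) :
    ∀ v : ℤ × ℤ × ℤ, ∃! z : ℤ × ℤ × ℤ, z ∈ Φ.ker ∧ v - z ∈ Vstar :=
  stmt15_general G hG Φ hinj
end
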